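/- For every integer n ≥ 2, the number of coconsistent subsets J of the 2-element subsets of [n] with contraction J/n = ∅ equals 2^{n−2}, and the number of coconsistent subsets J of the 2-element subsets of [n] with contraction J/n equal to the set of all singletons {{1},…,{n−1}} also equals 2^{n−2}. -/

import Mathlib

open Finset

/-- The `k`-element subsets of `[n] = {1, …, n}`. -/
def ksubsets (n k : ℕ) : Finset (Finset ℕ) := (Finset.Icc 1 n).powersetCard k

/-- The packet of `X`: all subsets of `X` with one element removed. -/
def packet (X : Finset ℕ) : Finset (Finset ℕ) := X.image (fun x => X.erase x)

/-- The copacket of `X` with respect to `[n]`: all sets `X ∪ {i}` for `i ∈ [n] \ X`. -/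
def copacket (n : ℕ) (X : Finset ℕ) : Finset (Finset ℕ) :=
  ((Finset.Icc 1 n) \ X).image (fun i => insert i X)

/-- The lexicographic order on finite sets of naturals viewed as increasing lists:
`X < Y` iff there is `m ∈ X \ Y` below which `X` and `Y` agree. -/
def lexLt (X Y : Finset ℕ) : Prop :=
  ∃ m ∈ X, m ∉ Y ∧ ∀ a < m, (a ∈ X ↔ a ∈ Y)

/-- `r` is a strict linear order on the collection `D`. -/
def IsStrictOrdOn (D : Finset (Finset ℕ)) (r : Finset ℕ → Finset ℕ → Prop) : Prop :=
  (∀ X ∈ D, ¬ r X X) ∧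
  (∀ X ∈ D, ∀ Y ∈ D, ∀ Z ∈ D, r X Y → r Y Z → r X Z) ∧
  (∀ X ∈ D, ∀ Y ∈ D, X ≠ Y → r X Y ∨ r Y X)

/-- The restriction of `r` to `P` is the lex order. -/
def RestrLex (r : Finset ℕ → Finset ℕ → Prop) (P : Finset (Finset ℕ)) : Prop :=
  ∀ A ∈ P, ∀ B ∈ P, (r A B ↔ lexLt A B)

/-- The restriction of `r` to `P` is the antilex order. -/
def RestrAntilex (r : Finset ℕ → Finset ℕ → Prop) (P : Finset (Finset ℕ)) : Prop :=
  ∀ A ∈ P, ∀ B ∈ P, (r A B ↔ lexLt B A)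

/-- `r` is an admissible order on the `k`-element subsets of `[n]`. -/
def Admissible (n k : ℕ) (r : Finset ℕ → Finset ℕ → Prop) : Prop :=
  IsStrictOrdOn (ksubsets n k) r ∧
  ∀ X ∈ ksubsets n (k+1), RestrLex r (packet X) ∨ RestrAntilex r (packet X)

/-- `r` is a coadmissible order on the `k`-element subsets of `[n]`. -/
def Coadmissible (n k : ℕ) (r : Finset ℕ → Finset ℕ → Prop) : Prop :=
  IsStrictOrdOn (ksubsets n k) r ∧
  ∀ X ∈ ksubsets n (k-1), RestrLex r (copacket n X) ∨ RestrAntilex r (copacket n X)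

open scoped Classical in
/-- The reversal set of an order on the `k`-element subsets of `[n]`:
the `(k+1)`-element subsets whose packet is restricted to the antilex order. -/
noncomputable def Rev (n k : ℕ) (r : Finset ℕ → Finset ℕ → Prop) : Finset (Finset ℕ) :=
  (ksubsets n (k+1)).filter (fun X => RestrAntilex r (packet X))

open scoped Classical in
/-- The coreversal set of an order on the `k`-element subsets of `[n]`:
the `(k-1)`-element subsets whose copacket is restricted to the antilex order. -/
noncomputable def Corev (n k : ℕ) (r : Finset ℕ → Finset ℕ → Prop) : Finset (Finset ℕ) :=
  (ksubsets n (k-1)).filter (fun X => RestrAntilex r (copacket n X))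

/-- `P ∩ I` is a prefix (lower set) of `P` in lex order. -/
def IsLexPrefix (P I : Finset (Finset ℕ)) : Prop :=
  ∀ A ∈ P, ∀ B ∈ P, B ∈ I → lexLt A B → A ∈ I

/-- `P ∩ I` is a suffix (upper set) of `P` in lex order. -/
def IsLexSuffix (P I : Finset (Finset ℕ)) : Prop :=
  ∀ A ∈ P, ∀ B ∈ P, A ∈ I → lexLt A B → B ∈ I

/-- `I` is a consistent subset of the `k`-element subsets of `[n]`. -/
def Consistent (n k : ℕ) (I : Finset (Finset ℕ)) : Prop :=
  I ⊆ ksubsets n k ∧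
  ∀ X ∈ ksubsets n (k+1), IsLexPrefix (packet X) I ∨ IsLexSuffix (packet X) I

/-- `I` is a coconsistent subset of the `k`-element subsets of `[n]`. -/
def CoConsistent (n k : ℕ) (I : Finset (Finset ℕ)) : Prop :=
  I ⊆ ksubsets n k ∧
  ∀ X ∈ ksubsets n (k-1), IsLexPrefix (copacket n X) I ∨ IsLexSuffix (copacket n X) I

/-- Deletion `I \ n` of a set of subsets. -/
def del (I : Finset (Finset ℕ)) (n : ℕ) : Finset (Finset ℕ) := I.filter (fun X => n ∉ X)

/-- Contraction `I / n` of a set of subsets. -/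
def contr (I : Finset (Finset ℕ)) (n : ℕ) : Finset (Finset ℕ) :=
  (I.filter (fun X => n ∈ X)).image (fun X => X.erase n)

/-- Contraction `ρ / n` of a linear order: `X < Y` iff `X ∪ {n} < Y ∪ {n}` in `ρ`. -/
def contrOrd (r : Finset ℕ → Finset ℕ → Prop) (n : ℕ) : Finset ℕ → Finset ℕ → Prop :=
  fun X Y => r (insert n X) (insert n Y)

/-- The Gale order: componentwise comparison of the increasing enumerations. -/
def galeLe (A B : Finset ℕ) : Prop :=
  List.Forall₂ (· ≤ ·) (A.sort (· ≤ ·)) (B.sort (· ≤ ·))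

/-- The consistent poset relation `≺_I` on the `(k-1)`-element subsets of `[n]`:
within the packet of `X ∈ I` the antilex order, and within the packet of
`X ∉ I` the lex order, transitively closed. -/
def cpRel (n k : ℕ) (I : Finset (Finset ℕ)) : Finset ℕ → Finset ℕ → Prop :=
  Relation.TransGen (fun A B =>
    ∃ X ∈ ksubsets n k, A ∈ packet X ∧ B ∈ packet X ∧
      ((X ∈ I ∧ lexLt B A) ∨ (X ∉ I ∧ lexLt A B)))

/-- A single-step-inclusion cover within the collection `C`. -/
def SSIStep (C : Finset (Finset ℕ) → Prop) (A B : Finset (Finset ℕ)) : Prop :=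
  C A ∧ C B ∧ ∃ Y, Y ∉ A ∧ B = insert Y A

/-- The single step inclusion order on the collection `C`. -/
def SSILe (C : Finset (Finset ℕ) → Prop) : Finset (Finset ℕ) → Finset (Finset ℕ) → Prop :=
  Relation.ReflTransGen (SSIStep C)

/-!
If `J / n = ∅`, no pair of `J` contains `n`, while `{x, n}` is the lex-largest member of the
copacket of `{x}`; so coconsistency says exactly that every neighbourhood in the graph `J` on
`[n - 1]` is a lex prefix, i.e. that `J` is a shifted graph. A shifted graph on `[a, b]` either
lacks the edge `{a, b}`, and then `b` is isolated, or contains it, and then `a` is adjacent to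
every vertex; deleting that vertex leaves a shifted graph on an interval one shorter, so there
are `2 ^ (b - a)` of them. Complementation in the `2`-subsets of `[n]` preserves coconsistency
and turns contraction `∅` into contraction `{{1}, …, {n - 1}}`.
-/

open Finset

section Coconsistent

variable {n k : ℕ}

lemma mem_ksubsets {X : Finset ℕ} : X ∈ ksubsets n k ↔ X ⊆ Icc 1 n ∧ X.card = k :=
  mem_powersetCard

lemma ksubsets_one (m : ℕ) : ksubsets m 1 = (Icc 1 m).image fun i => ({i} : Finset ℕ) := by
  rw [ksubsets, powersetCard_one, map_eq_image]
  rfl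

lemma mem_contr {I : Finset (Finset ℕ)} {Y : Finset ℕ} :
    Y ∈ contr I n ↔ n ∉ Y ∧ insert n Y ∈ I := by
  simp only [contr, mem_image, mem_filter]
  constructor
  · rintro ⟨X, ⟨hX, hnX⟩, rfl⟩
    exact ⟨notMem_erase n X, by rwa [insert_erase hnX]⟩
  · rintro ⟨hnY, hY⟩
    exact ⟨insert n Y, ⟨hY, mem_insert_self n Y⟩, erase_insert hnY⟩

lemma contr_eq_empty_iff {I : Finset (Finset ℕ)} : contr I n = ∅ ↔ ∀ X ∈ I, n ∉ X := by
  simp [contr, filter_eq_empty_iff]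

lemma Icc_one_sub_one_eq_erase (n : ℕ) : Icc 1 (n - 1) = (Icc 1 n).erase n := by
  ext
  simp only [mem_Icc, mem_erase]
  omega

lemma insert_mem_ksubsets_iff (hn : 1 ≤ n) (hk : 1 ≤ k) {Y : Finset ℕ} :
    n ∉ Y ∧ insert n Y ∈ ksubsets n k ↔ Y ∈ ksubsets (n - 1) (k - 1) := by
  simp only [mem_ksubsets, Icc_one_sub_one_eq_erase, subset_erase, insert_subset_iff, mem_Icc]
  constructor
  · rintro ⟨hnY, ⟨-, hY⟩, hcard⟩
    rw [card_insert_of_notMem hnY] at hcard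
    exact ⟨⟨hY, hnY⟩, by omega⟩
  · rintro ⟨⟨hY, hnY⟩, hcard⟩
    exact ⟨hnY, ⟨⟨hn, le_rfl⟩, hY⟩, by rw [card_insert_of_notMem hnY]; omega⟩

lemma contr_ksubsets_sdiff (hn : 1 ≤ n) (hk : 1 ≤ k) (I : Finset (Finset ℕ)) :
    contr (ksubsets n k \ I) n = ksubsets (n - 1) (k - 1) \ contr I n := by
  ext Y
  rw [mem_sdiff, mem_contr, mem_contr, mem_sdiff, ← insert_mem_ksubsets_iff hn hk]
  tauto

lemma lexLt_insert_insert {X : Finset ℕ} {i j : ℕ} (hi : i ∉ X) (hj : j ∉ X) :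
    lexLt (insert i X) (insert j X) ↔ i < j := by
  constructor
  · rintro ⟨m, hm, hmj, hagree⟩
    obtain rfl : m = i := by simp only [mem_insert] at hm hmj; tauto
    by_contra! hji
    have hj' :=
      (hagree j (lt_of_le_of_ne hji (by rintro rfl; simp at hmj))).2 (mem_insert_self j X)
    simp only [mem_insert] at hj' hmj
    tauto
  · intro hij
    refine ⟨i, mem_insert_self i X, by simp [hi, hij.ne], fun a ha => ?_⟩
    simp only [mem_insert, ha.ne, (ha.trans hij).ne, false_or]

lemma isLexPrefix_copacket_iff {X : Finset ℕ} {I : Finset (Finset ℕ)} :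
    IsLexPrefix (copacket n X) I ↔ ∀ i ∈ Icc 1 n \ X, ∀ j ∈ Icc 1 n \ X, i < j →
      insert j X ∈ I → insert i X ∈ I := by
  simp only [IsLexPrefix, copacket, forall_mem_image]
  refine forall₂_congr fun i hi => forall₂_congr fun j hj => ?_
  rw [lexLt_insert_insert (mem_sdiff.1 hi).2 (mem_sdiff.1 hj).2]
  tauto

lemma isLexSuffix_copacket_iff {X : Finset ℕ} {I : Finset (Finset ℕ)} :
    IsLexSuffix (copacket n X) I ↔ ∀ i ∈ Icc 1 n \ X, ∀ j ∈ Icc 1 n \ X, i < j →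
      insert i X ∈ I → insert j X ∈ I := by
  simp only [IsLexSuffix, copacket, forall_mem_image]
  refine forall₂_congr fun i hi => forall₂_congr fun j hj => ?_
  rw [lexLt_insert_insert (mem_sdiff.1 hi).2 (mem_sdiff.1 hj).2]
  tauto

lemma IsLexPrefix.sdiff {P I K : Finset (Finset ℕ)} (hPK : P ⊆ K) (h : IsLexPrefix P I) :
    IsLexSuffix P (K \ I) := fun A hA B hB hAI hAB =>
  mem_sdiff.2 ⟨hPK hB, fun hBI => (mem_sdiff.1 hAI).2 (h A hA B hB hBI hAB)⟩

lemma IsLexSuffix.sdiff {P I K : Finset (Finset ℕ)} (hPK : P ⊆ K) (h : IsLexSuffix P I) :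
    IsLexPrefix P (K \ I) := fun A hA B hB hBI hAB =>
  mem_sdiff.2 ⟨hPK hA, fun hAI => (mem_sdiff.1 hBI).2 (h A hA B hB hAI hAB)⟩

lemma copacket_subset_ksubsets (hk : 1 ≤ k) {X : Finset ℕ} (hX : X ∈ ksubsets n (k - 1)) :
    copacket n X ⊆ ksubsets n k := by
  rw [mem_ksubsets] at hX
  simp only [copacket, image_subset_iff, mem_sdiff, mem_ksubsets]
  rintro i ⟨hi, hiX⟩
  exact ⟨insert_subset hi hX.1, by rw [card_insert_of_notMem hiX, hX.2]; omega⟩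

lemma CoConsistent.sdiff (hk : 1 ≤ k) {I : Finset (Finset ℕ)} (hI : CoConsistent n k I) :
    CoConsistent n k (ksubsets n k \ I) :=
  ⟨sdiff_subset, fun X hX => ((hI.2 X hX).imp
    (IsLexPrefix.sdiff (copacket_subset_ksubsets hk hX))
    (IsLexSuffix.sdiff (copacket_subset_ksubsets hk hX))).symm⟩

/-- Complementation in `ksubsets n k` preserves coconsistency and complements the contraction. -/
lemma card_coconsistent_contr_eq_sdiff (hn : 1 ≤ n) (hk : 1 ≤ k) {F : Finset (Finset ℕ)}
    (hF : F ⊆ ksubsets (n - 1) (k - 1)) :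
    Nat.card {J // CoConsistent n k J ∧ contr J n = ksubsets (n - 1) (k - 1) \ F} =
      Nat.card {J // CoConsistent n k J ∧ contr J n = F} :=
  Nat.card_congr
    { toFun J := ⟨ksubsets n k \ J, J.2.1.sdiff hk,
        by rw [contr_ksubsets_sdiff hn hk, J.2.2, Finset.sdiff_sdiff_eq_self hF]⟩
      invFun J := ⟨ksubsets n k \ J, J.2.1.sdiff hk, by rw [contr_ksubsets_sdiff hn hk, J.2.2]⟩
      left_inv J := Subtype.ext (Finset.sdiff_sdiff_eq_self J.2.1.1)
      right_inv J := Subtype.ext (Finset.sdiff_sdiff_eq_self J.2.1.1) }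

end Coconsistent

section Shifted

/-- A graph is encoded by its set of edges `{j, x}`; it is shifted (above `a`) when every
neighbourhood is closed downwards in `[a, ∞)`. -/
def IsShifted (a : ℕ) (J : Finset (Finset ℕ)) : Prop :=
  ∀ x i j, a ≤ i → i < j → i ≠ x → {j, x} ∈ J → {i, x} ∈ J

open scoped Classical in
noncomputable def shiftedGraphs (a b : ℕ) : Finset (Finset (Finset ℕ)) :=
  ((Icc a b).powersetCard 2).powerset.filter (IsShifted a)

variable {a b : ℕ} {J : Finset (Finset ℕ)}

lemma mem_shiftedGraphs :
    J ∈ shiftedGraphs a b ↔ J ⊆ (Icc a b).powersetCard 2 ∧ IsShifted a J := by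
  simp [shiftedGraphs]

lemma pair_mem_powersetCard_two {s : Finset ℕ} {i j : ℕ} :
    {i, j} ∈ s.powersetCard 2 ↔ i ≠ j ∧ i ∈ s ∧ j ∈ s := by
  by_cases hij : i = j
  · subst hij; simp
  · simp [mem_powersetCard, insert_subset_iff, card_pair hij, hij]

lemma exists_eq_pair_of_mem_powersetCard_two {s X : Finset ℕ} {x : ℕ}
    (hX : X ∈ s.powersetCard 2) (hx : x ∈ X) : ∃ y, X = {y, x} := by
  obtain ⟨p, q, -, rfl⟩ := card_eq_two.1 (mem_powersetCard.1 hX).2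
  simp only [mem_insert, mem_singleton] at hx
  rcases hx with rfl | rfl
  · exact ⟨q, pair_comm _ _⟩
  · exact ⟨p, rfl⟩

lemma mem_powersetCard_erase {s X : Finset ℕ} {a k : ℕ} :
    X ∈ (s.erase a).powersetCard k ↔ X ∈ s.powersetCard k ∧ a ∉ X := by
  simp only [mem_powersetCard, subset_erase]
  tauto

lemma shiftedGraphs_self (a : ℕ) : shiftedGraphs a a = {∅} := by
  simp [shiftedGraphs, IsShifted, powersetCard_eq_empty.2]

/-- Without the edge `{a, b + 1}` the vertex `b + 1` is isolated. -/
lemma filter_notMem_shiftedGraphs :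
    (shiftedGraphs a (b + 1)).filter (fun J => {a, b + 1} ∉ J) = shiftedGraphs a b := by
  have hIcc : Icc a b = (Icc a (b + 1)).erase (b + 1) := by
    rw [Icc_erase_right, Ico_add_one_right_eq_Icc]
  ext J
  simp only [mem_filter, mem_shiftedGraphs, hIcc]
  constructor
  · rintro ⟨⟨hsub, hJ⟩, htop⟩
    refine ⟨fun X hX => mem_powersetCard_erase.2 ⟨hsub hX, fun hb => ?_⟩, hJ⟩
    obtain ⟨y, rfl⟩ := exists_eq_pair_of_mem_powersetCard_two (hsub hX) hb
    obtain ⟨-, hya, -⟩ := pair_mem_powersetCard_two.1 (hsub hX)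
    obtain ⟨hay, hyb⟩ := mem_Icc.1 hya
    obtain rfl | hay := eq_or_lt_of_le hay
    · exact htop hX
    · exact htop (hJ (b + 1) a y le_rfl hay (by omega) hX)
  · rintro ⟨hsub, hJ⟩
    refine ⟨⟨fun X hX => (mem_powersetCard_erase.1 (hsub hX)).1, hJ⟩, fun htop => ?_⟩
    exact (mem_powersetCard_erase.1 (hsub htop)).2 (by simp)

lemma IsShifted.filter_mem_eq (hJ : IsShifted a J) (hsub : J ⊆ (Icc a b).powersetCard 2)
    (htop : {a, b} ∈ J) :
    J.filter (a ∈ ·) = ((Icc a b).powersetCard 2).filter (a ∈ ·) := by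
  ext X
  simp only [mem_filter]
  refine ⟨fun h => ⟨hsub h.1, h.2⟩, fun ⟨hX, haX⟩ => ⟨?_, haX⟩⟩
  obtain ⟨c, rfl⟩ := exists_eq_pair_of_mem_powersetCard_two hX haX
  obtain ⟨hca, hc, -⟩ := pair_mem_powersetCard_two.1 hX
  obtain rfl | hcb := eq_or_lt_of_le (mem_Icc.1 hc).2
  · rwa [pair_comm]
  · exact hJ a c b (mem_Icc.1 hc).1 hcb hca (by rwa [pair_comm])

lemma IsShifted.filter_notMem (hJ : IsShifted a J) :
    IsShifted (a + 1) (J.filter (a ∉ ·)) := by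
  intro x i j hi hij hix hjx
  simp only [mem_filter, mem_insert, mem_singleton] at hjx ⊢
  exact ⟨hJ x i j (by omega) hij hix hjx.1, by omega⟩

lemma IsShifted.union_star {J' : Finset (Finset ℕ)} (hJ' : IsShifted (a + 1) J')
    (hsub : J' ⊆ (Icc (a + 1) b).powersetCard 2) :
    IsShifted a (J' ∪ ((Icc a b).powersetCard 2).filter (a ∈ ·)) := by
  intro x i j hi hij hix hjx
  simp only [mem_union, mem_filter, mem_insert, mem_singleton, pair_mem_powersetCard_two,
    mem_Icc] at hjx ⊢
  have hjx' : j ≠ x ∧ a ≤ j ∧ j ≤ b ∧ a ≤ x ∧ x ≤ b := by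
    rcases hjx with hjx | ⟨hjx, -⟩
    · have := pair_mem_powersetCard_two.1 (hsub hjx)
      simp only [mem_Icc] at this
      omega
    · omega
  obtain rfl | hai := eq_or_lt_of_le hi
  · exact .inr ⟨⟨hix, ⟨le_rfl, by omega⟩, by omega⟩, .inl rfl⟩
  rcases hjx with hjx | ⟨-, haj | rfl⟩
  · exact .inl (hJ' x i j hai hij hix hjx)
  · omega
  · exact .inr ⟨⟨hix, by omega, by omega⟩, .inr rfl⟩

/-- Deleting the vertex `a`, which the edge `{a, b + 1}` makes adjacent to every other vertex. -/
lemma card_filter_mem_shiftedGraphs (hab : a ≤ b) :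
    ((shiftedGraphs a (b + 1)).filter (fun J => {a, b + 1} ∈ J)).card =
      (shiftedGraphs (a + 1) (b + 1)).card := by
  have hIcc : Icc (a + 1) (b + 1) = (Icc a (b + 1)).erase a := by
    rw [Icc_erase_left, Icc_add_one_left_eq_Ioc]
  refine card_nbij' (fun J => J.filter (a ∉ ·))
    (· ∪ ((Icc a (b + 1)).powersetCard 2).filter (a ∈ ·)) ?_ ?_ ?_ ?_
  · intro J hJ
    simp only [coe_filter, Set.mem_ofPred_eq, mem_shiftedGraphs] at hJ
    refine mem_shiftedGraphs.2 ⟨fun X hX => ?_, hJ.1.2.filter_notMem⟩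
    rw [mem_filter] at hX
    exact hIcc ▸ mem_powersetCard_erase.2 ⟨hJ.1.1 hX.1, hX.2⟩
  · intro J' hJ'
    rw [mem_coe, mem_shiftedGraphs] at hJ'
    simp only [coe_filter, Set.mem_ofPred_eq, mem_shiftedGraphs, union_subset_iff]
    refine ⟨⟨⟨fun X hX => ?_, filter_subset _ _⟩, hJ'.2.union_star hJ'.1⟩, ?_⟩
    · exact (mem_powersetCard_erase.1 (hIcc ▸ hJ'.1 hX)).1
    · exact mem_union_right _ (mem_filter.2 ⟨pair_mem_powersetCard_two.2 ⟨by omega,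
        left_mem_Icc.2 (by omega), right_mem_Icc.2 (by omega)⟩, mem_insert_self _ _⟩)
  · intro J hJ
    simp only [coe_filter, Set.mem_ofPred_eq, mem_shiftedGraphs] at hJ
    dsimp only
    rw [← hJ.1.2.filter_mem_eq hJ.1.1 hJ.2, union_comm, filter_union_filter_not_eq]
  · intro J' hJ'
    rw [mem_coe, mem_shiftedGraphs] at hJ'
    dsimp only
    rw [filter_union, filter_false_of_mem fun X hX => not_not.2 (mem_filter.1 hX).2, union_empty,
      filter_true_of_mem fun X hX => (mem_powersetCard_erase.1 (hIcc ▸ hJ'.1 hX)).2]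

theorem card_shiftedGraphs (a d : ℕ) : (shiftedGraphs a (a + d)).card = 2 ^ d := by
  induction d generalizing a with
  | zero => simp [shiftedGraphs_self]
  | succ d ih =>
    rw [← add_assoc, ← card_filter_add_card_filter_not (fun J => {a, a + d + 1} ∈ J),
      card_filter_mem_shiftedGraphs (by omega), filter_notMem_shiftedGraphs,
      show a + d + 1 = a + 1 + d by omega, ih, ih, pow_succ]
    ring

end Shifted

lemma coconsistent_two_and_contr_eq_empty_iff {n : ℕ} {J : Finset (Finset ℕ)} :
    CoConsistent n 2 J ∧ contr J n = ∅ ↔ J ∈ shiftedGraphs 1 (n - 1) := by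
  have hsingleton : ∀ X, X ∈ ksubsets n (2 - 1) ↔ ∃ x ∈ Icc 1 n, X = {x} := by
    simp [ksubsets, powersetCard_one, eq_comm]
  rw [mem_shiftedGraphs, Icc_one_sub_one_eq_erase, contr_eq_empty_iff]
  constructor
  · rintro ⟨⟨hsub, hcoco⟩, hnJ⟩
    refine ⟨fun X hX => mem_powersetCard_erase.2 ⟨hsub hX, hnJ X hX⟩, ?_⟩
    intro x i j hi hij hix hjx
    obtain ⟨hjx', hj, hx⟩ := pair_mem_powersetCard_two.1 (hsub hjx)
    have hjn : j ≠ n := fun h => hnJ _ hjx (by simp [h])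
    have hxn : x ≠ n := fun h => hnJ _ hjx (by simp [h])
    have hj' : j ∈ Icc 1 n \ {x} := mem_sdiff.2 ⟨hj, notMem_singleton.2 hjx'⟩
    rcases hcoco {x} ((hsingleton _).2 ⟨x, hx, rfl⟩) with hpre | hsuf
    · have hi' : i ∈ Icc 1 n \ {x} :=
        mem_sdiff.2 ⟨mem_Icc.2 ⟨hi, hij.le.trans (mem_Icc.1 hj).2⟩, notMem_singleton.2 hix⟩
      exact isLexPrefix_copacket_iff.1 hpre i hi' j hj' hij hjx
    · have hn' : n ∈ Icc 1 n \ {x} :=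
        mem_sdiff.2 ⟨right_mem_Icc.2 ((mem_Icc.1 hj).1.trans (mem_Icc.1 hj).2),
          notMem_singleton.2 hxn.symm⟩
      have hjn' : j < n := lt_of_le_of_ne (mem_Icc.1 hj).2 hjn
      exact absurd (isLexSuffix_copacket_iff.1 hsuf j hj' n hn' hjn' hjx)
        fun h => hnJ _ h (mem_insert_self n {x})
  · rintro ⟨hsub, hJ⟩
    have hnJ X (hX : X ∈ J) : n ∉ X := (mem_powersetCard_erase.1 (hsub hX)).2
    refine ⟨⟨fun X hX => (mem_powersetCard_erase.1 (hsub hX)).1, ?_⟩, hnJ⟩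
    intro X hX
    obtain ⟨x, -, rfl⟩ := (hsingleton X).1 hX
    refine .inl (isLexPrefix_copacket_iff.2 fun i hi j _ hij hjx => ?_)
    simp only [mem_sdiff, mem_Icc, mem_singleton] at hi
    exact hJ x i j hi.1.1 hij hi.2 hjx

/-- For `n ≥ 2`, there are exactly `2^(n-2)` coconsistent subsets `J` of
the `2`-element subsets of `[n]` with `J / n = ∅`, and exactly `2^(n-2)` with
`J / n = {{1}, …, {n-1}}`. -/
theorem coconsistent_contraction_empty_full_count (n : ℕ) (hn : 2 ≤ n) :
    Nat.card {J : Finset (Finset ℕ) // CoConsistent n 2 J ∧ contr J n = ∅} = 2 ^ (n - 2) ∧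
    Nat.card {J : Finset (Finset ℕ) // CoConsistent n 2 J ∧
        contr J n = (Finset.Icc 1 (n - 1)).image (fun i => ({i} : Finset ℕ))} = 2 ^ (n - 2) := by
  have hempty : Nat.card {J // CoConsistent n 2 J ∧ contr J n = ∅} = 2 ^ (n - 2) := by
    rw [Nat.card_congr (Equiv.subtypeEquivRight fun J => coconsistent_two_and_contr_eq_empty_iff),
      Nat.card_eq_finsetCard, show n - 1 = 1 + (n - 2) by omega, card_shiftedGraphs]
  refine ⟨hempty, ?_⟩
  rw [← ksubsets_one, ← hempty, ← sdiff_empty (s := ksubsets (n - 1) 1)]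
  exact card_coconsistent_contr_eq_sdiff (by omega) (by omega) (empty_subset _)
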